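/- arXiv:1312.2334 — 3 statements merged into one kernel-verified Lean document; each statement's English description precedes it below -/
import Mathlib

section
/- Soundness of garbage collection for dirt constraints: let C be a transitively closed set of dirt constraints δ ≤ δ' (viewed as a reflexive transitive relation on dirt parameters), and let N, P be sets of parameters. Define gc(C) = { (δ⁻ ≤ δ⁺) ∈ C | δ⁻ ∈ N, δ⁺ ∈ P }. Then for every solution σ' of gc(C) (an assignment of finite sets to parameters monotone on gc(C)), the substitution σ defined by σ(δ) = ⋃ { σ'(δ⁻) | δ⁻ ∈ N, (δ⁻ ≤ δ) ∈ C } is a solution of all of C, and moreover σ(δ⁺) ⊆ σ'(δ⁺) for all δ⁺ ∈ P and σ'(δ⁻) ⊆ σ(δ⁻) for all δ⁻ ∈ N. -/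
section LowerUnion

variable {α β : Type*} {R : α → α → Prop} {N : Set α} {τ : α → Set β}

def lowerUnion (R : α → α → Prop) (N : Set α) (τ : α → Set β) (δ : α) : Set β :=
  {x | ∃ n ∈ N, R n δ ∧ x ∈ τ n}

theorem lowerUnion_mono (htrans : Transitive R) {a b : α} (hab : R a b) :
    lowerUnion R N τ a ⊆ lowerUnion R N τ b := by
  rintro x ⟨n, hn, hna, hx⟩
  exact ⟨n, hn, htrans hna hab, hx⟩

theorem lowerUnion_subset {p : α} (hτ : ∀ n ∈ N, R n p → τ n ⊆ τ p) :
    lowerUnion R N τ p ⊆ τ p := by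
  rintro x ⟨n, hn, hnp, hx⟩
  exact hτ n hn hnp hx

theorem subset_lowerUnion {n : α} (hn : n ∈ N) (hnn : R n n) :
    τ n ⊆ lowerUnion R N τ n :=
  fun _ hx => ⟨n, hn, hnn, hx⟩

end LowerUnion

/-- Soundness of garbage collection for dirt constraints: let `R` be a reflexive and
transitive relation on dirt parameters (the transitively closed constraint set `C`),
`N, P` sets of parameters, and `gc(C)` the restriction of the constraints to pairs in
`N × P`.  Given any solution `σ'` of `gc(C)` (assigning finite sets of operations,
monotone on the kept constraints), the substitution
`σ(δ) = ⋃ { σ'(δ⁻) | δ⁻ ∈ N, (δ⁻ ≤ δ) ∈ C }` solves all of `C`, with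
`σ(δ⁺) ⊆ σ'(δ⁺)` for `δ⁺ ∈ P` and `σ'(δ⁻) ⊆ σ(δ⁻)` for `δ⁻ ∈ N`. -/
theorem gc_dirt_sound {α β : Type*} (R : α → α → Prop) (N P : Set α)
    (hrefl : Reflexive R) (htrans : Transitive R)
    (σ' : α → Finset β)
    (hσ' : ∀ a b, R a b → a ∈ N → b ∈ P → σ' a ⊆ σ' b) :
    ∀ σ : α → Set β,
      (∀ δ, σ δ = { x | ∃ n ∈ N, R n δ ∧ x ∈ σ' n }) →
      (∀ a b, R a b → σ a ⊆ σ b) ∧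
      (∀ p ∈ P, σ p ⊆ (↑(σ' p) : Set β)) ∧
      (∀ n ∈ N, (↑(σ' n) : Set β) ⊆ σ n) := by
  intro σ hσ
  obtain rfl : σ = lowerUnion R N (fun a => (σ' a : Set β)) := funext hσ
  refine ⟨fun a b hab => lowerUnion_mono htrans hab, fun p hp => ?_,
    fun n hn => subset_lowerUnion (τ := fun a => (σ' a : Set β)) hn (hrefl n)⟩
  exact lowerUnion_subset fun n hn hnp => Finset.coe_subset.mpr (hσ' n p hnp hn hp)
end

section
/- Soundness of garbage collection for type constraints using lattice joins: let C be a transitively closed set of constraints α ≤ α' between type parameters, all within one skeleton, and N, P sets of parameters with gc(C) = {(α⁻ ≤ α⁺) ∈ C | α⁻ ∈ N, α⁺ ∈ P}. Suppose values are taken in a lattice (e.g., closed types of a fixed shape under subtyping). Given σ' satisfying gc(C), define σ(α) = ⊔ { σ'(α⁻) | α⁻ ∈ N, (α⁻ ≤ α) ∈ C } when this index set is nonempty, and σ(α) = ⊓ { σ'(α') | α' in the skeleton } otherwise. Then σ satisfies all constraints in C, σ(α⁺) ≤ σ'(α⁺) for α⁺ ∈ P, and σ'(α⁻) ≤ σ(α⁻)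 for α⁻ ∈ N — provided that no parameter in N lacks an N-lower bound (which holds since α⁻ ∈ N is its own lower bound by the implicit reflexive constraints). -/
/-!
Every `N`-lower bound of `a` is, by transitivity, an `N`-lower bound of each `R`-successor of `a`,
so the joins defining `σ` grow along `R`; the meet of all values of `σ'` lies below every such
join. For `p ∈ P` each joinand `σ' n` with `R n p`, `n ∈ N` is a `gc(C)`-constraint, hence below
`σ' p`; and `n ∈ N` is one of its own `N`-lower bounds by reflexivity.
-/

section GarbageCollection

variable {α L : Type*} (R : α → α → Prop) (N : Set α) (σ' : α → L)

def lowerBoundValues (a : α) : Set L := {x | ∃ n ∈ N, R n a ∧ x = σ' n}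

variable {R N σ'}

theorem lowerBoundValues_subset (htrans : Transitive R) {a b : α} (hab : R a b) :
    lowerBoundValues R N σ' a ⊆ lowerBoundValues R N σ' b := by
  rintro x ⟨n, hn, hna, rfl⟩
  exact ⟨n, hn, htrans hna hab, rfl⟩

variable [CompleteLattice L]

theorem le_sSup_lowerBoundValues {n a : α} (hn : n ∈ N) (hna : R n a) :
    σ' n ≤ sSup (lowerBoundValues R N σ' a) :=
  le_sSup ⟨n, hn, hna, rfl⟩

theorem sSup_lowerBoundValues_le {P : Set α} (hσ' : ∀ a b, R a b → a ∈ N → b ∈ P → σ' a ≤ σ' b)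
    {p : α} (hp : p ∈ P) : sSup (lowerBoundValues R N σ' p) ≤ σ' p :=
  sSup_le fun _ ⟨n, hn, hnp, hx⟩ => hx ▸ hσ' n p hnp hn hp

variable {σ : α → L}

theorem monotone_of_lowerBoundJoin
    (hpos : ∀ a, (∃ n ∈ N, R n a) → σ a = sSup (lowerBoundValues R N σ' a))
    (hneg : ∀ a, (¬ ∃ n ∈ N, R n a) → σ a = sInf (Set.range σ'))
    (htrans : Transitive R) {a b : α} (hab : R a b) :
    σ a ≤ σ b := by
  by_cases hb : ∃ n ∈ N, R n b
  · obtain ⟨n, hn, hnb⟩ := hb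
    rw [hpos b ⟨n, hn, hnb⟩]
    by_cases ha : ∃ n ∈ N, R n a
    · rw [hpos a ha]
      exact sSup_le_sSup (lowerBoundValues_subset htrans hab)
    · rw [hneg a ha]
      exact (sInf_le (Set.mem_range_self n)).trans (le_sSup_lowerBoundValues hn hnb)
  · have ha : ¬ ∃ n ∈ N, R n a := fun ⟨n, hn, hna⟩ => hb ⟨n, hn, htrans hna hab⟩
    rw [hneg a ha, hneg b hb]

theorem le_of_mem_of_lowerBoundJoin {P : Set α}
    (hpos : ∀ a, (∃ n ∈ N, R n a) → σ a = sSup (lowerBoundValues R N σ' a))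
    (hneg : ∀ a, (¬ ∃ n ∈ N, R n a) → σ a = sInf (Set.range σ'))
    (hσ' : ∀ a b, R a b → a ∈ N → b ∈ P → σ' a ≤ σ' b) {p : α} (hp : p ∈ P) : σ p ≤ σ' p := by
  by_cases hlow : ∃ n ∈ N, R n p
  · exact (hpos p hlow).trans_le (sSup_lowerBoundValues_le hσ' hp)
  · exact (hneg p hlow).trans_le (sInf_le (Set.mem_range_self p))

end GarbageCollection

/-- Soundness of garbage collection for type constraints using lattice joins: `R` is a
reflexive transitive set of constraints between type parameters (all in one skeleton),
`N, P` sets of parameters, and values are taken in a complete lattice.  Given `σ'`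
monotone on `gc(C) = C ∩ (N × P)`, the map `σ` sending a parameter to the join of the
`σ'`-values of its `N`-lower bounds (and to the meet of all values of `σ'` when it has
no `N`-lower bound) satisfies all constraints in `C`, with `σ(α⁺) ≤ σ'(α⁺)` for
`α⁺ ∈ P` and `σ'(α⁻) ≤ σ(α⁻)` for `α⁻ ∈ N`. -/
theorem gc_type_sound {α : Type*} {L : Type*} [CompleteLattice L]
    (R : α → α → Prop) (N P : Set α)
    (hrefl : Reflexive R) (htrans : Transitive R)
    (σ' : α → L)
    (hσ' : ∀ a b, R a b → a ∈ N → b ∈ P → σ' a ≤ σ' b) :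
    ∀ σ : α → L,
      (∀ a, (∃ n ∈ N, R n a) → σ a = sSup { x | ∃ n ∈ N, R n a ∧ x = σ' n }) →
      (∀ a, (¬ ∃ n ∈ N, R n a) → σ a = sInf (Set.range σ')) →
      (∀ a b, R a b → σ a ≤ σ b) ∧
      (∀ p ∈ P, σ p ≤ σ' p) ∧
      (∀ n ∈ N, σ' n ≤ σ n) := by
  intro σ hpos hneg
  refine ⟨fun a b hab => monotone_of_lowerBoundJoin hpos hneg htrans hab,
    fun p hp => le_of_mem_of_lowerBoundJoin hpos hneg hσ' hp, fun n hn => ?_⟩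
  rw [hpos n ⟨n, hn, hrefl n⟩]
  exact le_sSup_lowerBoundValues hn (hrefl n)
end

section
/- Abstract garbage collection preserves and reflects solvability with bounds: let (V, ≤_C) be a preorder given by a reflexive transitive relation C on a finite set V, N, P ⊆ V, and L a complete lattice. Then the set of L-valued monotone maps on C and the set of L-valued monotone maps on gc(C) = C ∩ (N × P) are related as follows: every monotone map on C is monotone on gc(C); and for every monotone map σ' on gc(C) there exists a monotone map σ on C with σ(p) ≤ σ'(p) for all p ∈ P and σ'(n) ≤ σ(n) for all n ∈ N. -/
/-!
The witness is the left extension of `σ'` from `N`: `σ v` is the join of `σ' n` over the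
`n ∈ N` with `C n v`. Transitivity of `C` makes it monotone, reflexivity puts it above `σ'`
on `N`, and monotonicity of `σ'` on `C ∩ (N × P)` puts it below `σ'` on `P`.
-/

section LeftExtend

variable {V L : Type*} [CompleteLattice L] {C : V → V → Prop} {N : Set V}

def leftExtend (C : V → V → Prop) (N : Set V) (σ : V → L) (v : V) : L :=
  ⨆ n ∈ N, ⨆ (_ : C n v), σ n

theorem leftExtend_le_iff {σ : V → L} {v : V} {x : L} :
    leftExtend C N σ v ≤ x ↔ ∀ n ∈ N, C n v → σ n ≤ x := by
  simp only [leftExtend, iSup_le_iff]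

theorem le_leftExtend (hrefl : Reflexive C) (σ : V → L) {n : V} (hn : n ∈ N) :
    σ n ≤ leftExtend C N σ n :=
  le_iSup₂_of_le n hn (le_iSup_of_le (hrefl n) le_rfl)

theorem leftExtend_mono (htrans : Transitive C) (σ : V → L) {a b : V} (hab : C a b) :
    leftExtend C N σ a ≤ leftExtend C N σ b :=
  leftExtend_le_iff.2 fun n hn hna => le_iSup₂_of_le n hn (le_iSup_of_le (htrans hna hab) le_rfl)

end LeftExtend

theorem gc_abstract_general {V : Type*} {L : Type*} [CompleteLattice L]
    (C : V → V → Prop) (N P : Set V)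
    (hrefl : Reflexive C) (htrans : Transitive C) :
    (∀ σ : V → L, (∀ a b, C a b → σ a ≤ σ b) →
      ∀ a b, C a b → a ∈ N → b ∈ P → σ a ≤ σ b) ∧
    (∀ σ' : V → L, (∀ a b, C a b → a ∈ N → b ∈ P → σ' a ≤ σ' b) →
      ∃ σ : V → L, (∀ a b, C a b → σ a ≤ σ b) ∧
        (∀ p ∈ P, σ p ≤ σ' p) ∧ (∀ n ∈ N, σ' n ≤ σ n)) := by
  refine ⟨fun σ hσ a b hab _ _ => hσ a b hab, fun σ' hσ' => ?_⟩
  refine ⟨leftExtend C N σ', fun a b => leftExtend_mono htrans σ', ?_, ?_⟩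
  · exact fun p hp => leftExtend_le_iff.2 fun n hn hnp => hσ' n p hnp hn hp
  · exact fun n hn => le_leftExtend hrefl σ' hn

/-- Abstract garbage collection preserves and reflects solvability with bounds: for a
preorder given by a reflexive transitive relation `C` on a finite set `V`, subsets
`N, P ⊆ V` and a complete lattice `L`, every `L`-valued map monotone on `C` is
monotone on `gc(C) = C ∩ (N × P)`; and for every map `σ'` monotone on `gc(C)` there
is a map `σ` monotone on `C` with `σ(p) ≤ σ'(p)` for `p ∈ P` and `σ'(n) ≤ σ(n)`
for `n ∈ N`. -/
theorem gc_abstract {V : Type*} [Fintype V] {L : Type*} [CompleteLattice L]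
    (C : V → V → Prop) (N P : Set V)
    (hrefl : Reflexive C) (htrans : Transitive C) :
    (∀ σ : V → L, (∀ a b, C a b → σ a ≤ σ b) →
      ∀ a b, C a b → a ∈ N → b ∈ P → σ a ≤ σ b) ∧
    (∀ σ' : V → L, (∀ a b, C a b → a ∈ N → b ∈ P → σ' a ≤ σ' b) →
      ∃ σ : V → L, (∀ a b, C a b → σ a ≤ σ b) ∧
        (∀ p ∈ P, σ p ≤ σ' p) ∧ (∀ n ∈ N, σ' n ≤ σ n)) :=
  gc_abstract_general C N P hrefl htrans
end
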